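/- arXiv:math/0608210 — 6 statements merged into one kernel-verified Lean document; each statement's English description precedes it below -/
import Mathlib

section
/- For all a, b, a', b' in F_q with q = 2^(2m+1), the matrices S(a,b) satisfy S(a,b) · S(a',b') = S(a + a', b + b' + a^t · a'), where t = 2^(m+1). -/
open Matrix

noncomputable section

/-- The matrix `S(a, b)` generating the Frobenius kernel of a point stabiliser in `Sz(q)`. -/
def Smat {F : Type*} [Field F] (t : ℕ) (a b : F) : Matrix (Fin 4) (Fin 4) F :=
  !![1, 0, 0, 0;
     a, 1, 0, 0;
     b, a ^ t, 1, 0;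
     a ^ (2 + t) + a * b + b ^ t, a ^ (1 + t) + b, a, 1]


/-- `S(a,b) · S(a',b') = S(a + a', b + b' + aᵗ·a')` in `F_q`, `q = 2^(2m+1)`, `t = 2^(m+1)`. -/
theorem Smat_mul (m : ℕ) (F : Type*) [Field F] [Fintype F]
    (hF : Fintype.card F = 2 ^ (2 * m + 1)) (a b a' b' : F) :
    Smat (2 ^ (m + 1)) a b * Smat (2 ^ (m + 1)) a' b' =
      Smat (2 ^ (m + 1)) (a + a') (b + b' + a ^ (2 ^ (m + 1)) * a') := by
  -- characteristic 2
  haveI : CharP F (ringChar F) := ringChar.charP F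
  have hprime : (ringChar F).Prime := CharP.char_is_prime F (ringChar F)
  have hchar : CharP F 2 := by
    obtain ⟨n, hn, hcard⟩ := FiniteField.card F (ringChar F)
    have hpe : ringChar F = 2 := by
      have h := hF ▸ hcard
      have hdvd : ringChar F ∣ 2 ^ (2 * m + 1) := h ▸ dvd_pow_self _ n.pos.ne'
      exact (Nat.prime_dvd_prime_iff_eq hprime Nat.prime_two).mp
        (hprime.dvd_of_dvd_pow hdvd)
    exact hpe ▸ ringChar.charP F
  haveI := hchar
  have h2 : (2 : F) = 0 := by exact_mod_cast CharP.cast_eq_zero F 2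
  set t := 2 ^ (m + 1) with ht
  have hadd : ∀ x y : F, (x + y) ^ t = x ^ t + y ^ t := fun x y => by
    rw [ht]; exact add_pow_char_pow x y 2 (m + 1)
  have hsq : ∀ x : F, (x ^ t) ^ t = x ^ 2 := by
    intro x
    have h1 : (x ^ t) ^ t = (x ^ 2 ^ (2 * m + 1)) ^ 2 := by
      rw [← pow_mul, ← pow_mul, ht, ← pow_add, ← pow_succ]
      ring_nf
    rw [h1, ← hF, FiniteField.pow_card]
  have hB : (b + b' + a ^ t * a') ^ t = b ^ t + b' ^ t + a ^ 2 * a' ^ t := by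
    rw [hadd, hadd, mul_pow, hsq]
  have hA : (a + a') ^ t = a ^ t + a' ^ t := hadd a a'
  have hp2 : ∀ x : F, x ^ (2 + t) = x ^ 2 * x ^ t := fun x => pow_add x 2 t
  have hp1 : ∀ x : F, x ^ (1 + t) = x * x ^ t := fun x => by
    rw [pow_add, pow_one]
  ext i j
  fin_cases i <;> fin_cases j <;>
    simp [Smat, Matrix.mul_apply, Fin.sum_univ_four, hp2, hp1, hA, hB] <;>
    first
    | ring1
    | linear_combination
        (-(a * a ^ t * a' + a ^ 2 * a' ^ t + a * a' * a' ^ t + a ^ t * a' ^ 2)) * h2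
    | linear_combination (-(a ^ t * a')) * h2
end
end

section
/- The set F = {S(a,b) : a, b in F_q} is a subgroup of GL(4,q) of order q^2, where q = 2^(2m+1). -/
/-!
In characteristic 2 with `t = 2 ^ (m + 1)`, the map `x ↦ x ^ t` is additive and
`(x ^ t) ^ t = x ^ (2q) = x ^ 2`. With these two facts a direct computation gives
`S(a, b) * S(c, d) = S(a + c, b + d + a ^ t * c)`, so the matrices `S(a, b)` are closed under
products, `S(0, 0) = 1` and `S(a, b)⁻¹ = S(a, b + a ^ (1 + t))`. The entries in positions
`(1, 0)` and `(2, 0)` recover `(a, b)`, so there are exactly `q ^ 2` of them.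
-/

open Matrix

noncomputable section

theorem FiniteField.pow_two_pow_succ_pow_two_pow_succ {F : Type*} [Field F] [Fintype F] {m : ℕ}
    (hF : Fintype.card F = 2 ^ (2 * m + 1)) (x : F) :
    (x ^ 2 ^ (m + 1)) ^ 2 ^ (m + 1) = x ^ 2 := by
  rw [← pow_mul, ← pow_add, show m + 1 + (m + 1) = 2 * m + 1 + 1 by ring, pow_succ, pow_mul,
    ← hF, FiniteField.pow_card]

section SuzukiUnipotent

variable {F : Type*} [Field F]

theorem Smat_inj {t : ℕ} {a b c d : F} : Smat t a b = Smat t c d ↔ a = c ∧ b = d := by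
  refine ⟨fun h => ⟨?_, ?_⟩, fun ⟨hac, hbd⟩ => hac ▸ hbd ▸ rfl⟩
  · simpa [Smat] using congrFun₂ h 1 0
  · simpa [Smat] using congrFun₂ h 2 0

theorem Smat_zero_zero {t : ℕ} (ht : t ≠ 0) : Smat t 0 0 = (1 : Matrix (Fin 4) (Fin 4) F) := by
  ext i j
  fin_cases i <;> fin_cases j <;> simp [Smat, one_apply, ht]

variable [CharP F 2] {k : ℕ}

theorem Smat_mul_Smat (hsq : ∀ x : F, (x ^ 2 ^ k) ^ 2 ^ k = x ^ 2) (a b c d : F) :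
    Smat (2 ^ k) a b * Smat (2 ^ k) c d = Smat (2 ^ k) (a + c) (b + d + a ^ 2 ^ k * c) := by
  ext i j
  fin_cases i <;> fin_cases j <;>
    simp only [Smat, mul_apply, Fin.sum_univ_four, of_apply, cons_val', cons_val, cons_val_zero,
      cons_val_one, cons_val_fin_one, Fin.isValue, Fin.mk_one, Fin.reduceFinMk, Fin.zero_eta,
      zero_mul, mul_zero, zero_add, add_zero, pow_add, pow_one, mul_pow, add_pow_char_pow, hsq]
  all_goals grind

theorem Smat_mul_Smat_eq_one (hsq : ∀ x : F, (x ^ 2 ^ k) ^ 2 ^ k = x ^ 2) (a b b' : F)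
    (hb : b + b' = a ^ (1 + 2 ^ k)) : Smat (2 ^ k) a b * Smat (2 ^ k) a b' = 1 := by
  rw [Smat_mul_Smat hsq, ← Smat_zero_zero (pow_ne_zero k two_ne_zero)]
  congr 1 <;> grind

def smatUnit (hsq : ∀ x : F, (x ^ 2 ^ k) ^ 2 ^ k = x ^ 2) (a b : F) : GL (Fin 4) F where
  val := Smat (2 ^ k) a b
  inv := Smat (2 ^ k) a (b + a ^ (1 + 2 ^ k))
  val_inv := Smat_mul_Smat_eq_one hsq _ _ _ <| by
    rw [← add_assoc, CharTwo.add_self_eq_zero, zero_add]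
  inv_val := Smat_mul_Smat_eq_one hsq _ _ _ <| by
    rw [add_right_comm, CharTwo.add_self_eq_zero, zero_add]

theorem smatUnit_injective (hsq : ∀ x : F, (x ^ 2 ^ k) ^ 2 ^ k = x ^ 2) :
    Function.Injective fun p : F × F => smatUnit hsq p.1 p.2 := by
  rintro ⟨a, b⟩ ⟨c, d⟩ h
  obtain ⟨rfl, rfl⟩ := Smat_inj.mp (congrArg Units.val h)
  rfl

def smatSubgroup (hsq : ∀ x : F, (x ^ 2 ^ k) ^ 2 ^ k = x ^ 2) : Subgroup (GL (Fin 4) F) where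
  carrier := Set.range fun p : F × F => smatUnit hsq p.1 p.2
  mul_mem' := by
    rintro _ _ ⟨⟨a, b⟩, rfl⟩ ⟨⟨c, d⟩, rfl⟩
    exact ⟨(a + c, b + d + a ^ 2 ^ k * c), Units.ext (Smat_mul_Smat hsq a b c d).symm⟩
  one_mem' := ⟨(0, 0), Units.ext (Smat_zero_zero (pow_ne_zero k two_ne_zero))⟩
  inv_mem' := by
    rintro _ ⟨⟨a, b⟩, rfl⟩
    exact ⟨(a, b + a ^ (1 + 2 ^ k)), Units.ext rfl⟩

theorem setOf_val_mem_smatSubgroup (hsq : ∀ x : F, (x ^ 2 ^ k) ^ 2 ^ k = x ^ 2) :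
    {M : Matrix (Fin 4) (Fin 4) F | ∃ g ∈ smatSubgroup hsq, (g : Matrix (Fin 4) (Fin 4) F) = M} =
      {M | ∃ a b : F, M = Smat (2 ^ k) a b} := by
  ext M
  constructor
  · rintro ⟨_, ⟨⟨a, b⟩, rfl⟩, rfl⟩
    exact ⟨a, b, rfl⟩
  · rintro ⟨a, b, rfl⟩
    exact ⟨smatUnit hsq a b, ⟨(a, b), rfl⟩, rfl⟩

theorem card_smatSubgroup (hsq : ∀ x : F, (x ^ 2 ^ k) ^ 2 ^ k = x ^ 2) :
    Nat.card (smatSubgroup hsq) = Nat.card F ^ 2 := by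
  rw [← SetLike.coe_sort_coe]
  change Nat.card (Set.range _) = _
  rw [Nat.card_range_of_injective (smatUnit_injective hsq), Nat.card_prod, sq]

end SuzukiUnipotent

/-- The set `{S(a,b) : a, b ∈ F_q}` is (the underlying set of matrices of) a subgroup of
`GL(4,q)` of order `q²`, where `q = 2^(2m+1)`. -/
theorem Smat_subgroup (m : ℕ) (F : Type*) [Field F] [Fintype F]
    (hF : Fintype.card F = 2 ^ (2 * m + 1)) :
    ∃ H : Subgroup (GL (Fin 4) F),
      {M : Matrix (Fin 4) (Fin 4) F | ∃ g ∈ H, (g : Matrix (Fin 4) (Fin 4) F) = M} =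
        {M : Matrix (Fin 4) (Fin 4) F | ∃ a b : F, M = Smat (2 ^ (m + 1)) a b} ∧
      Nat.card H = (Fintype.card F) ^ 2 := by
  have : CharP F 2 := charP_of_card_eq_prime_pow hF
  have hsq := FiniteField.pow_two_pow_succ_pow_two_pow_succ hF
  refine ⟨smatSubgroup hsq, setOf_val_mem_smatSubgroup hsq, ?_⟩
  rw [card_smatSubgroup, Nat.card_eq_fintype_card]
end
end

section
/- The center of the group F = {S(a,b) : a, b in F_q} is exactly {S(0,b) : b in F_q}, where q = 2^(2m+1) with m > 0. -/
open Matrix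

noncomputable section

open Polynomial in
lemma exists_pow_ne (F : Type*) [Field F] [Fintype F] (t : ℕ) (ht : 2 ≤ t)
    (hcard : t < Fintype.card F) : ∃ c : F, c ^ t ≠ c := by
  classical
  by_contra h
  push_neg at h
  set p : Polynomial F := X ^ t - X with hp
  have hp0 : p ≠ 0 := by
    intro h0
    have hc : p.coeff t = 1 := by
      simp [hp, Polynomial.coeff_X_pow, Polynomial.coeff_X, show ¬(1:ℕ) = t by omega]
    rw [h0] at hc
    simp at hc
  have hdeg : p.natDegree ≤ t := by
    refine le_trans (Polynomial.natDegree_sub_le _ _) ?_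
    simp [Polynomial.natDegree_X_pow, Polynomial.natDegree_X]
    omega
  have hsub : (Finset.univ : Finset F) ⊆ p.roots.toFinset := by
    intro x _
    rw [Multiset.mem_toFinset, Polynomial.mem_roots hp0]
    simp [Polynomial.IsRoot, hp, h x]
  have := (Finset.card_le_card hsub).trans
    ((p.roots.toFinset_card_le).trans ((p.card_roots').trans hdeg))
  simp [Finset.card_univ] at this
  omega

lemma Smat_zero_comm (F : Type*) [Field F] (t : ℕ) (ht : t ≠ 0) (b c d : F) :
    Smat t 0 b * Smat t c d = Smat t c d * Smat t 0 b := by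
  ext i j
  fin_cases i <;> fin_cases j <;>
    simp [Smat, Matrix.mul_apply, Fin.sum_univ_succ, zero_pow ht,
      zero_pow (by omega : 2 + t ≠ 0), zero_pow (by omega : 1 + t ≠ 0)] <;> ring


/-- The centre of the group `F = {S(a,b) : a, b ∈ F_q}` is exactly `{S(0,b) : b ∈ F_q}`. -/
theorem Smat_center (m : ℕ) (hm : 0 < m) (F : Type*) [Field F] [Fintype F]
    (hF : Fintype.card F = 2 ^ (2 * m + 1))
    (H : Subgroup (GL (Fin 4) F))
    (hH : {M : Matrix (Fin 4) (Fin 4) F | ∃ g ∈ H, (g : Matrix (Fin 4) (Fin 4) F) = M} =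
      {M : Matrix (Fin 4) (Fin 4) F | ∃ a b : F, M = Smat (2 ^ (m + 1)) a b}) :
    {M : Matrix (Fin 4) (Fin 4) F |
        ∃ g ∈ H, (∀ h ∈ H, g * h = h * g) ∧ (g : Matrix (Fin 4) (Fin 4) F) = M} =
      {M : Matrix (Fin 4) (Fin 4) F | ∃ b : F, M = Smat (2 ^ (m + 1)) 0 b} := by
  set t : ℕ := 2 ^ (m + 1) with htdef
  have ht2 : 2 ≤ t := by
    calc 2 = 2 ^ 1 := by norm_num
    _ ≤ 2 ^ (m + 1) := Nat.pow_le_pow_right (by norm_num) (by omega)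
  have hHiff := Set.ext_iff.mp hH
  simp only [Set.mem_setOf_eq] at hHiff
  ext M
  simp only [Set.mem_setOf_eq]
  constructor
  · rintro ⟨g, hg, hcomm, hgM⟩
    obtain ⟨a, b, hab⟩ := (hHiff M).mp ⟨g, hg, hgM⟩
    have key : ∀ c : F, a ^ t * c = c ^ t * a := by
      intro c
      obtain ⟨h, hh, hhM⟩ := (hHiff (Smat t c 0)).mpr ⟨c, 0, rfl⟩
      have hmul := congrArg Units.val (hcomm h hh)
      rw [Units.val_mul, Units.val_mul, hgM, hhM, hab] at hmul
      have h20 := congrFun (congrFun hmul 2) 0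
      simp [Smat, Matrix.mul_apply, Fin.sum_univ_succ] at h20
      linear_combination h20
    have ha : a = 0 := by
      by_contra ha
      have hat : a ^ t = a := by
        have h1 := key 1
        rw [mul_one, one_pow, one_mul] at h1
        exact h1
      have hall : ∀ c : F, c ^ t = c := by
        intro c
        have h2 := key c
        rw [hat, mul_comm a c] at h2
        exact (mul_right_cancel₀ ha h2).symm
      obtain ⟨c, hc⟩ := exists_pow_ne F t ht2
        (by rw [hF, htdef]; exact Nat.pow_lt_pow_right (by norm_num) (by omega))
      exact hc (hall c)
    exact ⟨b, by rw [hab, ha]⟩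
  · rintro ⟨b, hb⟩
    obtain ⟨g, hg, hgM⟩ := (hHiff (Smat t 0 b)).mpr ⟨0, b, rfl⟩
    refine ⟨g, hg, ?_, by rw [hgM, hb]⟩
    intro h hh
    obtain ⟨c, d, hcd⟩ := (hHiff (h : Matrix (Fin 4) (Fin 4) F)).mp ⟨h, hh, rfl⟩
    apply Units.ext
    rw [Units.val_mul, Units.val_mul, hgM, hcd]
    exact Smat_zero_comm F t (by omega) b c d
end
end

section
/- Every element S(a,b) with a ≠ 0 has order 4, and every nonidentity element S(0,b) has order 2; in particular S(a,b)^2 = S(0, a^(t+1)) for all a, b in F_q. -/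
open Matrix

noncomputable section

theorem Smat_sq {F : Type*} [Field F] [CharP F 2] (t : ℕ) (ht : t ≠ 0)
    (hfr : ∀ x : F, x ^ (t * t) = x ^ 2) (a b : F) :
    Smat t a b ^ 2 = Smat t 0 (a ^ (t + 1)) := by
  have h2 : (2 : F) = 0 := by exact_mod_cast CharP.cast_eq_zero F 2
  have h : (a ^ (t + 1)) ^ t = a ^ 2 * a ^ t := by
    rw [← pow_mul]
    have : (t + 1) * t = t * t + t := by ring
    rw [this, pow_add, hfr]
  ext i j
  fin_cases i <;> fin_cases j <;>
    simp [Smat, pow_two, Matrix.mul_apply, Fin.sum_univ_four, zero_pow ht]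
  · linear_combination a * h2
  · linear_combination b * h2
  · linear_combination (a ^ t) * h2
  · linear_combination -h + (a ^ (2 + t) + b ^ t + 2 * a * b) * h2
  · linear_combination (a ^ (1 + t) + b) * h2
  · linear_combination a * h2

theorem Smat_zero {F : Type*} [Field F] (t : ℕ) (ht : t ≠ 0) :
    Smat (F := F) t 0 0 = 1 := by
  ext i j
  fin_cases i <;> fin_cases j <;>
    simp [Smat, Matrix.one_apply, Matrix.vecHead, Matrix.vecTail, zero_pow ht]

theorem Smat_ne_one {F : Type*} [Field F] (t : ℕ) (b : F) (hb : b ≠ 0) :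
    Smat t 0 b ≠ 1 := by
  intro h
  apply hb
  have := congrFun (congrFun h 2) 0
  simpa [Smat, Matrix.one_apply] using this

/-- `S(a,b)² = S(0, a^(t+1))`; every `S(a,b)` with `a ≠ 0` has order 4 and every
nonidentity `S(0,b)` has order 2. -/
theorem Smat_orders (m : ℕ) (F : Type*) [Field F] [Fintype F]
    (hF : Fintype.card F = 2 ^ (2 * m + 1)) :
    (∀ a b : F, Smat (2 ^ (m + 1)) a b ^ 2 = Smat (2 ^ (m + 1)) 0 (a ^ (2 ^ (m + 1) + 1))) ∧
    (∀ a b : F, a ≠ 0 → orderOf (Smat (2 ^ (m + 1)) a b) = 4) ∧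
    (∀ b : F, b ≠ 0 → orderOf (Smat (2 ^ (m + 1)) 0 b) = 2) := by
  -- characteristic 2
  have hp2 : ringChar F = 2 := by
    have hprime : (ringChar F).Prime := CharP.char_is_prime F _
    obtain ⟨n, -, hcard⟩ := FiniteField.card F (ringChar F)
    have hdvd : ringChar F ∣ Fintype.card F := hcard ▸ dvd_pow_self _ n.ne_zero
    rw [hF] at hdvd
    have := hprime.dvd_of_dvd_pow hdvd
    exact (Nat.prime_dvd_prime_iff_eq hprime Nat.prime_two).mp this
  haveI : CharP F 2 := hp2 ▸ ringChar.charP F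
  set t := 2 ^ (m + 1) with htdef
  have ht : t ≠ 0 := by positivity
  have hfr : ∀ x : F, x ^ (t * t) = x ^ 2 := by
    intro x
    have : t * t = Fintype.card F * 2 := by
      rw [hF, htdef, ← pow_add, ← pow_succ]
      congr 1
      omega
    rw [this, pow_mul, FiniteField.pow_card]
  have hsq := Smat_sq (F := F) t ht hfr
  refine ⟨fun a b => hsq a b, fun a b ha => ?_, fun b hb => ?_⟩
  · haveI : Fact (Nat.Prime 2) := ⟨Nat.prime_two⟩
    have h4 : (Smat t a b ^ 2) ^ 2 = 1 := by
      rw [hsq a b, hsq 0 _, zero_pow (by omega), Smat_zero t ht]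
    have h2 : Smat t a b ^ 2 ≠ 1 := by
      rw [hsq a b]
      exact Smat_ne_one t _ (pow_ne_zero _ ha)
    have h2' : ¬ Smat t a b ^ 2 ^ 1 = 1 := by simpa using h2
    have h4' : Smat t a b ^ 2 ^ (1 + 1) = 1 := by
      have he : (2:ℕ) ^ (1 + 1) = 2 * 2 := by norm_num
      rw [he, pow_mul]; exact h4
    have := orderOf_eq_prime_pow h2' h4'
    simpa using this
  · haveI : Fact (Nat.Prime 2) := ⟨Nat.prime_two⟩
    have h2 : Smat t 0 b ^ 2 = 1 := by
      rw [hsq 0 b, zero_pow (by omega), Smat_zero t ht]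
    exact orderOf_eq_prime h2 (Smat_ne_one t b hb)
end
end

section
/- Let G be a finite simple group and suppose c ∈ G is a nontrivial element such that Cent_G(c) ∩ Cent_G(c)^x = 1 whenever Cent_G(c) ≠ Cent_G(c)^x (for all x ∈ G). If G = ⟨X⟩ is a nonabelian simple group with this centralizer property, then there exists x ∈ X with [c, c^x] ≠ 1. -/
open scoped commutatorElement

/-- If `G = ⟨X⟩` is a finite nonabelian simple group and `c ≠ 1` satisfies the
centraliser dichotomy (any conjugate of `Cent_G(c)` either equals `Cent_G(c)` or meets
it trivially), then there exists `x ∈ X` with `[c, cˣ] ≠ 1`. -/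
theorem simple_group_commutator_generator (G : Type*) [Group G] [Finite G]
    (hsimple : IsSimpleGroup G) (hnonab : ∃ a b : G, a * b ≠ b * a)
    (X : Set G) (hX : Subgroup.closure X = ⊤)
    (c : G) (hc : c ≠ 1)
    (hcent : ∀ x : G,
      Subgroup.centralizer {x⁻¹ * c * x} = Subgroup.centralizer {c} ∨
      Subgroup.centralizer {x⁻¹ * c * x} ⊓ Subgroup.centralizer {c} = ⊥) :
    ∃ x ∈ X, ⁅c, x⁻¹ * c * x⁆ ≠ 1 := by
  by_contra hcon
  push_neg at hcon
  -- every x ∈ X: c commutes with x⁻¹ * c * x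
  have hcomm : ∀ x ∈ X, c * (x⁻¹ * c * x) = (x⁻¹ * c * x) * c := by
    intro x hx
    have h' : c * (x⁻¹ * c * x) * c⁻¹ * (x⁻¹ * c * x)⁻¹ = 1 := by
      simpa [commutatorElement_def] using hcon x hx
    calc c * (x⁻¹ * c * x) = (c * (x⁻¹ * c * x) * c⁻¹ * (x⁻¹ * c * x)⁻¹) *
          ((x⁻¹ * c * x) * c) := by group
      _ = (x⁻¹ * c * x) * c := by rw [h']; group
  have key : ∀ x ∈ X, Subgroup.centralizer {x⁻¹ * c * x} = Subgroup.centralizer {c} := by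
    intro x hx
    rcases hcent x with h | h
    · exact h
    · exfalso
      have hmem : x⁻¹ * c * x ∈
          Subgroup.centralizer {x⁻¹ * c * x} ⊓ Subgroup.centralizer {c} := by
        refine ⟨Subgroup.mem_centralizer_iff.2 ?_, Subgroup.mem_centralizer_iff.2 ?_⟩
        · rintro h rfl; rfl
        · rintro h rfl
          exact hcomm x hx
      rw [h, Subgroup.mem_bot] at hmem
      apply hc
      calc c = x * (x⁻¹ * c * x) * x⁻¹ := by group
        _ = 1 := by rw [hmem]; group
  have hnorm : Subgroup.centralizer {c} = ⊤ := by
    have hXn : X ⊆ Subgroup.normalizer ((Subgroup.centralizer {c} : Subgroup G) : Set G) := by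
      intro x hx
      rw [SetLike.mem_coe, Subgroup.mem_normalizer_iff]
      intro h
      constructor
      · intro hh
        have : h ∈ Subgroup.centralizer {x⁻¹ * c * x} := (key x hx).symm ▸ hh
        have hcm := Subgroup.mem_centralizer_iff.1 this (x⁻¹ * c * x) rfl
        refine Subgroup.mem_centralizer_iff.2 ?_
        rintro g rfl
        -- (x⁻¹ c x) h = h (x⁻¹ c x)  ⇒  c (x h x⁻¹) = (x h x⁻¹) c
        have := congrArg (fun t => x * t * x⁻¹) hcm
        simpa [mul_assoc] using this
      · intro hh
        have hcm := Subgroup.mem_centralizer_iff.1 hh c rfl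
        have : h ∈ Subgroup.centralizer {x⁻¹ * c * x} := by
          refine Subgroup.mem_centralizer_iff.2 ?_
          rintro g rfl
          have := congrArg (fun t => x⁻¹ * t * x) hcm
          simpa [mul_assoc] using this
        exact (key x hx) ▸ this
    have : Subgroup.normalizer ((Subgroup.centralizer {c} : Subgroup G) : Set G) = ⊤ := by
      rw [eq_top_iff, ← hX, Subgroup.closure_le]
      exact hXn
    have hn : (Subgroup.centralizer {c} : Subgroup G).Normal :=
      Subgroup.normalizer_eq_top_iff.1 this
    rcases hn.eq_bot_or_eq_top with hbot | htop
    · exfalso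
      have : c ∈ Subgroup.centralizer {c} := Subgroup.mem_centralizer_iff.2 (by
        rintro g rfl; rfl)
      rw [hbot, Subgroup.mem_bot] at this
      exact hc this
    · exact htop
  -- c is central, so the center is nontrivial, hence ⊤, hence G abelian: contradiction
  have hcen : c ∈ Subgroup.center G := by
    rw [Subgroup.mem_center_iff]
    intro g
    have : g ∈ Subgroup.centralizer {c} := hnorm ▸ Subgroup.mem_top g
    exact (Subgroup.mem_centralizer_iff.1 this c rfl).symm
  have hznormal : (Subgroup.center G).Normal := inferInstance
  rcases hznormal.eq_bot_or_eq_top with hbot | htop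
  · rw [hbot, Subgroup.mem_bot] at hcen; exact hc hcen
  · obtain ⟨a, b, hab⟩ := hnonab
    apply hab
    have : a ∈ Subgroup.center G := htop ▸ Subgroup.mem_top a
    exact (Subgroup.mem_center_iff.1 this b).symm
end

section
/- Let q = 2^(2m+1), t = 2^(m+1), and J the 4×4 antidiagonal identity matrix over F_q (the standard symplectic form). Then every generator S(a,b), M'(λ), T of Sz(q) satisfies g J g^T = J; hence Sz(q) ≤ Sp(4,q). -/
open Matrix

noncomputable section

/-- The diagonal matrix `M'(λ) = diag(λ^(t+1), λ, λ⁻¹, λ^(-t-1))`. -/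
def Mmat {F : Type*} [Field F] (t : ℕ) (u : Fˣ) : Matrix (Fin 4) (Fin 4) F :=
  !![(u : F) ^ (t + 1), 0, 0, 0;
     0, (u : F), 0, 0;
     0, 0, ((u⁻¹ : Fˣ) : F), 0;
     0, 0, 0, ((u⁻¹ : Fˣ) : F) ^ (t + 1)]

/-- The antidiagonal permutation matrix `T`. -/
def Tmat (F : Type*) [Field F] : Matrix (Fin 4) (Fin 4) F :=
  !![0, 0, 0, 1;
     0, 0, 1, 0;
     0, 1, 0, 0;
     1, 0, 0, 0]

/-- The generating set of the Suzuki group inside `GL(4, q)`. -/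
def SzGens (F : Type*) [Field F] (t : ℕ) : Set (GL (Fin 4) F) :=
  {g | (∃ a b : F, (g : Matrix (Fin 4) (Fin 4) F) = Smat t a b) ∨
       (∃ u : Fˣ, (g : Matrix (Fin 4) (Fin 4) F) = Mmat t u) ∨
       (g : Matrix (Fin 4) (Fin 4) F) = Tmat F}

/-- The standard symplectic form `J` (the antidiagonal identity). -/
def Jmat (F : Type*) [Field F] : Matrix (Fin 4) (Fin 4) F :=
  !![0, 0, 0, 1;
     0, 0, 1, 0;
     0, 1, 0, 0;
     1, 0, 0, 0]

/-- The subgroup of `GL(4, F)` preserving `J`. -/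
def SpJ (F : Type*) [Field F] : Subgroup (GL (Fin 4) F) where
  carrier := {g | (g : Matrix (Fin 4) (Fin 4) F) * Jmat F *
      (g : Matrix (Fin 4) (Fin 4) F)ᵀ = Jmat F}
  one_mem' := by simp
  mul_mem' := by
    intro g h hg hh
    simp only [Set.mem_setOf_eq, Units.val_mul, Matrix.transpose_mul] at *
    calc (g : Matrix (Fin 4) (Fin 4) F) * (h : Matrix (Fin 4) (Fin 4) F) * Jmat F *
          ((h : Matrix (Fin 4) (Fin 4) F)ᵀ * (g : Matrix (Fin 4) (Fin 4) F)ᵀ)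
        = (g : Matrix (Fin 4) (Fin 4) F) *
            ((h : Matrix (Fin 4) (Fin 4) F) * Jmat F * (h : Matrix (Fin 4) (Fin 4) F)ᵀ) *
            (g : Matrix (Fin 4) (Fin 4) F)ᵀ := by
          simp only [Matrix.mul_assoc]
      _ = Jmat F := by rw [hh, hg]
  inv_mem' := by
    intro g hg
    simp only [Set.mem_setOf_eq] at *
    have h1 : ((g⁻¹ : GL (Fin 4) F) : Matrix (Fin 4) (Fin 4) F) *
        (g : Matrix (Fin 4) (Fin 4) F) = 1 := by
      rw [← Units.val_mul, inv_mul_cancel, Units.val_one]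
    have h2 : (g : Matrix (Fin 4) (Fin 4) F)ᵀ *
        ((g⁻¹ : GL (Fin 4) F) : Matrix (Fin 4) (Fin 4) F)ᵀ = 1 := by
      rw [← Matrix.transpose_mul, ← Units.val_mul, inv_mul_cancel, Units.val_one,
        Matrix.transpose_one]
    calc ((g⁻¹ : GL (Fin 4) F) : Matrix (Fin 4) (Fin 4) F) * Jmat F *
          ((g⁻¹ : GL (Fin 4) F) : Matrix (Fin 4) (Fin 4) F)ᵀ
        = ((g⁻¹ : GL (Fin 4) F) : Matrix (Fin 4) (Fin 4) F) *
            ((g : Matrix (Fin 4) (Fin 4) F) * Jmat F * (g : Matrix (Fin 4) (Fin 4) F)ᵀ) *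
            ((g⁻¹ : GL (Fin 4) F) : Matrix (Fin 4) (Fin 4) F)ᵀ := by rw [hg]
      _ = (((g⁻¹ : GL (Fin 4) F) : Matrix (Fin 4) (Fin 4) F) *
            (g : Matrix (Fin 4) (Fin 4) F)) * Jmat F *
            ((g : Matrix (Fin 4) (Fin 4) F)ᵀ *
              ((g⁻¹ : GL (Fin 4) F) : Matrix (Fin 4) (Fin 4) F)ᵀ) := by
          simp only [Matrix.mul_assoc]
      _ = Jmat F := by rw [h1, h2, Matrix.one_mul, Matrix.mul_one]

set_option maxHeartbeats 1000000 in
/-- Every generator `S(a,b)`, `M'(λ)`, `T` of `Sz(q)` satisfies `g J gᵀ = J`; hence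
`Sz(q) ≤ Sp(4, q)`. -/
theorem generators_preserve_symplectic_form (m : ℕ) (F : Type*) [Field F] [Fintype F]
    (hF : Fintype.card F = 2 ^ (2 * m + 1)) :
    (∀ a b : F, Smat (2 ^ (m + 1)) a b * Jmat F * (Smat (2 ^ (m + 1)) a b)ᵀ = Jmat F) ∧
    (∀ u : Fˣ, Mmat (2 ^ (m + 1)) u * Jmat F * (Mmat (2 ^ (m + 1)) u)ᵀ = Jmat F) ∧
    (Tmat F * Jmat F * (Tmat F)ᵀ = Jmat F) ∧
    (∀ g ∈ Subgroup.closure (SzGens F (2 ^ (m + 1))),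
      (g : Matrix (Fin 4) (Fin 4) F) * Jmat F * (g : Matrix (Fin 4) (Fin 4) F)ᵀ =
        Jmat F) := by
  have hchar : ringChar F = 2 := by
    rw [FiniteField.even_card_iff_char_two, hF]
    exact Nat.pow_mod 2 (2*m+1) 2 ▸ by simp
  haveI : CharP F 2 := hchar ▸ ringChar.charP F
  have h2 : (2 : F) = 0 := CharTwo.two_eq_zero
  have h4 : (4 : F) = 0 := by rw [show (4 : F) = 2 * 2 by norm_num, h2, mul_zero]
  have hS : ∀ a b : F, Smat (2 ^ (m + 1)) a b * Jmat F * (Smat (2 ^ (m + 1)) a b)ᵀ =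
      Jmat F := by
    intro a b
    ext i j
    fin_cases i <;> fin_cases j <;>
      simp [Smat, Jmat, Matrix.mul_apply, Fin.sum_univ_four, Matrix.transpose_apply,
        Matrix.vecHead, Matrix.vecTail] <;>
      ring_nf <;> simp [h2, h4] <;> ring
  have hM : ∀ u : Fˣ, Mmat (2 ^ (m + 1)) u * Jmat F * (Mmat (2 ^ (m + 1)) u)ᵀ = Jmat F := by
    intro u
    have hu : (u : F) * ((u⁻¹ : Fˣ) : F) = 1 := by
      rw [← Units.val_mul, mul_inv_cancel, Units.val_one]
    ext i j
    fin_cases i <;> fin_cases j <;>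
      simp [Mmat, Jmat, Matrix.mul_apply, Fin.sum_univ_four, Matrix.transpose_apply,
        Matrix.vecHead, Matrix.vecTail] <;>
      rw [← mul_pow, hu, one_pow]
  have hT : Tmat F * Jmat F * (Tmat F)ᵀ = Jmat F := by
    ext i j
    fin_cases i <;> fin_cases j <;>
      simp [Tmat, Jmat, Matrix.mul_apply, Fin.sum_univ_four, Matrix.transpose_apply,
        Matrix.vecHead, Matrix.vecTail]
  refine ⟨hS, hM, hT, ?_⟩
  intro g hg
  have : Subgroup.closure (SzGens F (2 ^ (m + 1))) ≤ SpJ F := by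
    rw [Subgroup.closure_le]
    rintro g (⟨a, b, hab⟩ | ⟨u, hu⟩ | ht)
    · show (g : Matrix (Fin 4) (Fin 4) F) * Jmat F * (g : Matrix (Fin 4) (Fin 4) F)ᵀ = Jmat F
      rw [hab]; exact hS a b
    · show (g : Matrix (Fin 4) (Fin 4) F) * Jmat F * (g : Matrix (Fin 4) (Fin 4) F)ᵀ = Jmat F
      rw [hu]; exact hM u
    · show (g : Matrix (Fin 4) (Fin 4) F) * Jmat F * (g : Matrix (Fin 4) (Fin 4) F)ᵀ = Jmat F
      rw [ht]; exact hT
  exact this hg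
end
end
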